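/- Let m ≥ 1, let λ₁, …, λ_m ∈ ℂ be pairwise distinct, and for each s let f^s be a nonzero tempered distribution on ℝ which is a quasi associated homogeneous distribution of degree λ_s and some order k_s ∈ ℕ. Then f^1, …, f^m are linearly independent over ℂ: if c₁f^1 + ⋯ + c_m f^m = 0 with c_s ∈ ℂ, then c₁ = ⋯ = c_m = 0. -/

import Mathlib

/-!
For `a > 0` let `D_a` be the pullback `F ↦ F ∘ dilate a`. The QAHD identity says that
`(D_a - a ^ (λ + 1)) f` is a linear combination of QAHDs of degree `λ` and lower order, so by
induction on the order every QAHD of degree `λ` is a generalized eigenvector of `D_a` with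
eigenvalue `a ^ (λ + 1)`. Writing `a = e ^ t`, two of the numbers `a ^ (λ_s + 1)` coincide only
for `t` in a countable set, so for a suitable `a` the `f^s` are nonzero generalized eigenvectors
of one operator with distinct eigenvalues, hence linearly independent.
-/

open MeasureTheory SchwartzMap Complex Finset

noncomputable section

variable {E : Type*} [NormedAddCommGroup E] [NormedSpace ℝ E]

/-- The dilation operator on Schwartz functions: for `a ≠ 0`,
`dilate a φ = fun x => φ (a⁻¹ • x)`, i.e. `x ↦ φ (x / a)` (junk value `0` for `a = 0`). -/
def dilate (a : ℝ) : 𝓢(E, ℂ) →L[ℝ] 𝓢(E, ℂ) :=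
  if h : a = 0 then 0 else
    SchwartzMap.compCLM ℝ (g := fun x : E => a⁻¹ • x)
      (by convert (a⁻¹ • ContinuousLinearMap.id ℝ E).hasTemperateGrowth using 1 <;> (ext x; simp))
      ⟨1, |a|, fun x => by
        have ha : a ≠ 0 := h
        have h0 : |a| ≠ 0 := abs_ne_zero.mpr ha
        have hx : ‖a⁻¹ • x‖ = |a|⁻¹ * ‖x‖ := by
          rw [norm_smul, norm_inv, Real.norm_eq_abs]
        have key : |a| * (1 + ‖a⁻¹ • x‖) ^ 1 = |a| + ‖x‖ := by
          rw [pow_one, hx, mul_add, mul_one, ← mul_assoc, mul_inv_cancel₀ h0, one_mul]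
        calc ‖x‖ ≤ |a| + ‖x‖ := le_add_of_nonneg_left (abs_nonneg a)
          _ = |a| * (1 + ‖a⁻¹ • x‖) ^ 1 := key.symm⟩

lemma dilate_apply (a : ℝ) (ha : a ≠ 0) (φ : 𝓢(E, ℂ)) (x : E) :
    dilate a φ x = φ (a⁻¹ • x) := by
  simp [dilate, dif_neg ha]

/-- On `ℝ`, `dilate a φ` is the function `x ↦ φ (x / a)`. -/
lemma dilate_apply_real (a : ℝ) (ha : a ≠ 0) (φ : 𝓢(ℝ, ℂ)) (x : ℝ) :
    dilate a φ x = φ (x / a) := by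
  rw [dilate_apply a ha, smul_eq_mul, inv_mul_eq_div]

/-- A tempered distribution on `ℝ` is homogeneous of degree `λ` if
`⟨f, φ(·/a)⟩ = a^(λ+1) ⟨f, φ⟩` for all `a > 0` and all Schwartz `φ`. -/
def IsHomogeneous (lam : ℂ) (f : 𝓢(ℝ, ℂ) →L[ℂ] ℂ) : Prop :=
  ∀ a : ℝ, 0 < a → ∀ φ : 𝓢(ℝ, ℂ), f (dilate a φ) = (a : ℂ) ^ (lam + 1) * f φ

/-- Quasi associated homogeneous distribution of degree `λ` and order `k` on `ℝ`:
for `k = 0` a homogeneous distribution of degree `λ`; for `k ≥ 1`, there are QAHDs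
`g j` of degree `λ` and order `j` for `j < k` such that
`⟨f, φ(·/a)⟩ = a^(λ+1) ⟨f, φ⟩ + ∑_{r=1}^{k} a^(λ+1) (log a)^r ⟨g (k-r), φ⟩`. -/
inductive IsQAHD (lam : ℂ) : ℕ → (𝓢(ℝ, ℂ) →L[ℂ] ℂ) → Prop
  | base {f : 𝓢(ℝ, ℂ) →L[ℂ] ℂ} (hf : IsHomogeneous lam f) : IsQAHD lam 0 f
  | step {k : ℕ} (hk : 0 < k) {f : 𝓢(ℝ, ℂ) →L[ℂ] ℂ} (g : ℕ → (𝓢(ℝ, ℂ) →L[ℂ] ℂ))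
      (hg : ∀ j, j < k → IsQAHD lam j (g j))
      (hf : ∀ a : ℝ, 0 < a → ∀ φ : 𝓢(ℝ, ℂ),
        f (dilate a φ) = (a : ℂ) ^ (lam + 1) * f φ
          + ∑ r ∈ Finset.Icc 1 k,
              (a : ℂ) ^ (lam + 1) * (Real.log a : ℂ) ^ r * (g (k - r)) φ) :
      IsQAHD lam k f

def dilateDual (a : ℝ) : Module.End ℂ (𝓢(ℝ, ℂ) → ℂ) :=
  LinearMap.funLeft ℂ ℂ (dilate a)

theorem Module.End.mem_maxGenEigenspace_of_sub_smul_apply_mem {R M : Type*} [CommRing R]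
    [AddCommGroup M] [Module R M] {T : Module.End R M} {μ : R} {x : M}
    (hx : (T - μ • 1) x ∈ T.maxGenEigenspace μ) : x ∈ T.maxGenEigenspace μ := by
  obtain ⟨n, hn⟩ := (T.mem_maxGenEigenspace μ _).mp hx
  exact (T.mem_maxGenEigenspace μ x).mpr ⟨n + 1, by rwa [pow_succ, Module.End.mul_apply]⟩

theorem IsQAHD.mem_maxGenEigenspace_dilateDual {lam : ℂ} {k : ℕ} {f : 𝓢(ℝ, ℂ) →L[ℂ] ℂ}
    (hf : IsQAHD lam k f) {a : ℝ} (ha : 0 < a) :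
    ⇑f ∈ (dilateDual a).maxGenEigenspace ((a : ℂ) ^ (lam + 1)) := by
  apply Module.End.mem_maxGenEigenspace_of_sub_smul_apply_mem
  induction hf with
  | base hf =>
    convert Submodule.zero_mem _
    ext φ
    simp [dilateDual, hf a ha φ]
  | @step k hk f g hg hf ih =>
    have hlower : (dilateDual a - (a : ℂ) ^ (lam + 1) • 1) ⇑f =
        ∑ r ∈ Icc 1 k, ((a : ℂ) ^ (lam + 1) * (Real.log a : ℂ) ^ r) • ⇑(g (k - r)) := by
      ext φ
      simp [dilateDual, hf a ha φ]
    rw [hlower]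
    refine Submodule.sum_mem _ fun r hr => Submodule.smul_mem _ _ ?_
    have hr := Finset.mem_Icc.mp hr
    exact Module.End.mem_maxGenEigenspace_of_sub_smul_apply_mem (ih (k - r) (by omega))

theorem exists_pos_cpow_injective {ι : Type*} [Countable ι] {ν : ι → ℂ}
    (hν : Function.Injective ν) : ∃ a : ℝ, 0 < a ∧ Function.Injective fun i => (a : ℂ) ^ ν i := by
  set collisions : Set ℝ := ⋃ (i) (j) (_ : i ≠ j), (fun t : ℝ => (ν i - ν j) * t) ⁻¹' {z | exp z = 1}
  have hcollisions : collisions.Countable := by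
    refine Set.countable_iUnion fun i => Set.countable_iUnion fun j =>
      Set.countable_iUnion fun hij => Set.Countable.preimage ?_ fun s t hst => ?_
    · have hperiods : {z : ℂ | exp z = 1} = Set.range fun n : ℤ => n * (2 * Real.pi * I) := by
        ext z
        simp [Complex.exp_eq_one_iff, eq_comm]
      rw [hperiods]
      exact Set.countable_range _
    · exact_mod_cast mul_left_cancel₀ (sub_ne_zero.mpr (hν.ne hij)) hst
  obtain ⟨t, ht⟩ := (hcollisions.dense_compl ℝ).nonempty
  refine ⟨Real.exp t, Real.exp_pos t, fun i j hij => by_contra fun hne => ht ?_⟩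
  have hexp : ∀ w : ℂ, ((Real.exp t : ℝ) : ℂ) ^ w = exp (w * t) := fun w => by
    rw [cpow_def_of_ne_zero (by exact_mod_cast (Real.exp_pos t).ne'),
      ← ofReal_log (Real.exp_pos t).le, Real.log_exp, mul_comm]
  simp only [hexp] at hij
  simp only [collisions, Set.mem_iUnion, Set.mem_preimage, Set.mem_ofPred_eq]
  exact ⟨i, j, hne, by rw [sub_mul, exp_sub, hij, div_self (exp_ne_zero _)]⟩

theorem stmt_2_general (m : ℕ) (lam : Fin m → ℂ) (hlam : Function.Injective lam)
    (k : Fin m → ℕ) (f : Fin m → (𝓢(ℝ, ℂ) →L[ℂ] ℂ))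
    (hne : ∀ s, f s ≠ 0) (hq : ∀ s, IsQAHD (lam s) (k s) (f s))
    (c : Fin m → ℂ) (hsum : ∑ s, c s • f s = 0) :
    ∀ s, c s = 0 := by
  obtain ⟨a, ha, hinj⟩ := exists_pos_cpow_injective ((add_left_injective 1).comp hlam)
  have hli : LinearIndependent ℂ fun s => ⇑(f s) :=
    ((dilateDual a).independent_maxGenEigenspace.comp hinj).linearIndependent _
      (fun s => (hq s).mem_maxGenEigenspace_dilateDual ha)
      (fun s => DFunLike.coe_injective.ne (hne s))
  refine Fintype.linearIndependent_iff.mp hli c ?_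
  simpa only [FunLike.coe_sum, FunLike.coe_smul, FunLike.coe_zero] using congrArg DFunLike.coe hsum

/-- nonzero QAHDs with pairwise distinct degrees are linearly independent. -/
theorem stmt_2 (m : ℕ) (hm : 1 ≤ m) (lam : Fin m → ℂ) (hlam : Function.Injective lam)
    (k : Fin m → ℕ) (f : Fin m → (𝓢(ℝ, ℂ) →L[ℂ] ℂ))
    (hne : ∀ s, f s ≠ 0) (hq : ∀ s, IsQAHD (lam s) (k s) (f s))
    (c : Fin m → ℂ) (hsum : ∑ s, c s • f s = 0) :
    ∀ s, c s = 0 :=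
  stmt_2_general m lam hlam k f hne hq c hsum

end
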